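/- Let A ∈ ℝ^{m×n} with SVD truncation A_r = S_{r,A} Σ_{r,A} T_{r,A}^T (r ≤ rank A, and σ_r(A) > 0), and let H ∈ ℝ^{n×r}. If the r×r matrix T_{r,A}^T H is nonsingular, then ‖(A_r H)⁺‖ ≤ ‖(T_{r,A}^T H)⁻¹‖ / σ_r(A). -/

import Mathlib

open Matrix

/-- The `j`-th largest singular value (1-indexed) of a real matrix, defined as the square
root of the `j`-th largest eigenvalue of `AᴴA`; it is `0` for `j` out of range. -/
noncomputable def singularValue {m n : ℕ} (A : Matrix (Fin m) (Fin n) ℝ) (j : ℕ) : ℝ :=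
  if h : 1 ≤ j ∧ j ≤ n then
    Real.sqrt ((Matrix.isHermitian_conjTranspose_mul_self A).eigenvalues
      (Tuple.sort (Matrix.isHermitian_conjTranspose_mul_self A).eigenvalues ⟨n - j, by omega⟩))
  else 0


/-- The Moore–Penrose pseudoinverse of a full-column-rank matrix: `A⁺ = (AᵀA)⁻¹ Aᵀ`. -/
noncomputable def pinvFCR {m n : ℕ} (A : Matrix (Fin m) (Fin n) ℝ) : Matrix (Fin n) (Fin m) ℝ :=
  (Aᵀ * A)⁻¹ * Aᵀ

/-! Write `S_r`, `T_r` for the leading `r` columns of `S`, `T` and `D = diag(σ₁(A), …, σ_r(A))`,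
so that `A_r H = S_r D (T_rᵀ H)`. As `S_r` has orthonormal columns and `D (T_rᵀ H)` is
invertible, `(A_r H)⁺ = (T_rᵀ H)⁻¹ D⁻¹ S_rᵀ`, and submultiplicativity of the spectral norm with
`‖D⁻¹‖ = 1 / σ_r(A)` and `‖S_rᵀ‖ ≤ 1` gives the bound. The first singular value is identified with
the spectral norm through the spectral theorem for `XᴴX` and the C⋆-identity `‖XᴴX‖ = ‖X‖²`. -/

open scoped Matrix.Norms.L2Operator

lemma Matrix.IsHermitian.l2_opNorm_eq_norm_eigenvalues {𝕜 n : Type*} [RCLike 𝕜] [Fintype n]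
    [DecidableEq n] {A : Matrix n n 𝕜} (hA : A.IsHermitian) : ‖A‖ = ‖hA.eigenvalues‖ := by
  conv_lhs => rw [hA.spectral_theorem]
  rw [Unitary.conjStarAlgAut_apply, ← Unitary.coe_star, CStarRing.norm_mul_coe_unitary,
    CStarRing.norm_coe_unitary_mul, l2_opNorm_diagonal]
  simp [Pi.norm_def]

lemma norm_eq_apply_sort_last_of_nonneg {b : ℕ} (hb : 0 < b) {f : Fin b → ℝ} (hf : 0 ≤ f) :
    ‖f‖ = f (Tuple.sort f ⟨b - 1, by omega⟩) := by
  refine le_antisymm ((pi_norm_le_iff_of_nonneg (hf _)).2 fun i => ?_) ?_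
  · rw [Real.norm_of_nonneg (hf i)]
    have hi : (Tuple.sort f).symm i ≤ ⟨b - 1, by omega⟩ :=
      Fin.le_def.2 (by have := ((Tuple.sort f).symm i).isLt; simp only; omega)
    simpa using Tuple.monotone_sort f hi
  · exact (le_abs_self _).trans (norm_le_pi_norm f _)

lemma singularValue_one_eq_l2_opNorm {a b : ℕ} (X : Matrix (Fin a) (Fin b) ℝ) :
    singularValue X 1 = ‖X‖ := by
  rcases Nat.eq_zero_or_pos b with rfl | hb
  · rw [singularValue, dif_neg (by omega), Subsingleton.elim X 0, norm_zero]
  · rw [singularValue, dif_pos ⟨le_rfl, hb⟩, ← norm_eq_apply_sort_last_of_nonneg hb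
      (eigenvalues_conjTranspose_mul_self_nonneg X),
      ← (isHermitian_conjTranspose_mul_self X).l2_opNorm_eq_norm_eigenvalues,
      l2_opNorm_conjTranspose_mul_self, Real.sqrt_mul_self (norm_nonneg X)]

lemma singularValue_le_singularValue {m n : ℕ} (A : Matrix (Fin m) (Fin n) ℝ) {j k : ℕ}
    (hj : 1 ≤ j) (hjk : j ≤ k) (hk : k ≤ n) : singularValue A k ≤ singularValue A j := by
  rw [singularValue, singularValue, dif_pos ⟨by omega, hk⟩, dif_pos ⟨hj, by omega⟩]
  apply Real.sqrt_le_sqrt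
  exact Tuple.monotone_sort (isHermitian_conjTranspose_mul_self A).eigenvalues
    (Fin.mk_le_mk.2 (by omega))

lemma l2_opNorm_le_one_of_conjTranspose_mul_self_eq_one {𝕜 m n : Type*} [RCLike 𝕜] [Fintype m]
    [Fintype n] [DecidableEq n] {Q : Matrix m n 𝕜} (hQ : Qᴴ * Q = 1) : ‖Q‖ ≤ 1 := by
  have hsq : ‖Q‖ * ‖Q‖ ≤ 1 := by
    rw [← l2_opNorm_conjTranspose_mul_self, hQ, ← diagonal_one, l2_opNorm_diagonal]
    exact pi_norm_le_iff_of_nonneg zero_le_one |>.2 fun _ => norm_one.le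
  nlinarith [norm_nonneg Q]

lemma transpose_mul_self_submatrix_eq_one {α m n l : Type*} [Semiring α] [Fintype m]
    [DecidableEq n] [DecidableEq l] {S : Matrix m n α} (hS : Sᵀ * S = 1) {e : l → n}
    (he : Function.Injective e) : (S.submatrix id e)ᵀ * S.submatrix id e = 1 := by
  rw [transpose_submatrix, ← submatrix_mul _ _ _ _ _ Function.bijective_id, hS, submatrix_one _ he]

lemma l2_opNorm_inv_diagonal_le {n : Type*} [Fintype n] [DecidableEq n] {d : n → ℝ} {c : ℝ}
    (hc : 0 < c) (hd : ∀ i, c ≤ d i) : ‖(diagonal d)⁻¹‖ ≤ c⁻¹ := by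
  have hpos : ∀ i, 0 < d i := fun i => hc.trans_le (hd i)
  have hinv : (diagonal d)⁻¹ = diagonal fun i => (d i)⁻¹ :=
    inv_eq_left_inv <| by
      rw [diagonal_mul_diagonal, ← diagonal_one]
      exact congrArg diagonal (funext fun i => inv_mul_cancel₀ (hpos i).ne')
  rw [hinv, l2_opNorm_diagonal]
  refine (pi_norm_le_iff_of_nonneg (by positivity)).2 fun i => ?_
  rw [Real.norm_of_nonneg (inv_nonneg.2 (hpos i).le)]
  exact inv_anti₀ hc (hd i)

lemma pinvFCR_mul_of_transpose_mul_self_eq_one {m n : ℕ} {Q : Matrix (Fin m) (Fin n) ℝ}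
    (hQ : Qᵀ * Q = 1) {M : Matrix (Fin n) (Fin n) ℝ} (hM : IsUnit M.det) :
    pinvFCR (Q * M) = M⁻¹ * Qᵀ := by
  have hgram : (Q * M)ᵀ * (Q * M) = Mᵀ * M := by
    rw [transpose_mul, Matrix.mul_assoc, ← Matrix.mul_assoc Qᵀ, hQ, Matrix.one_mul]
  rw [pinvFCR, hgram, Matrix.mul_inv_rev, transpose_mul, Matrix.mul_assoc,
    ← Matrix.mul_assoc (Mᵀ)⁻¹, nonsing_inv_mul _ (by rwa [det_transpose]), Matrix.one_mul]

lemma truncatedDiagonal_eq_mul_diagonal_mul {m n r : ℕ} (hrm : r ≤ m) (hrn : r ≤ n) (d : ℕ → ℝ) :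
    (of fun (i : Fin m) (j : Fin n) =>
        if (i : ℕ) = (j : ℕ) ∧ (i : ℕ) < r then d (i.1 + 1) else 0) =
      (1 : Matrix (Fin m) (Fin m) ℝ).submatrix id (Fin.castLE hrm) *
        diagonal (fun p : Fin r => d (p.1 + 1)) *
        ((1 : Matrix (Fin n) (Fin n) ℝ).submatrix id (Fin.castLE hrn))ᵀ := by
  ext i j
  rw [mul_apply, Finset.sum_congr rfl fun p _ => by rw [mul_diagonal]]
  simp only [submatrix_apply, transpose_apply, one_apply, id, Fin.ext_iff, Fin.val_castLE]
  rw [Fin.sum_univ_eq_sum_range (fun k => (if (i : ℕ) = k then 1 else 0) * d (k + 1) *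
    (if (j : ℕ) = k then 1 else 0))]
  simp only [ite_mul, one_mul, zero_mul, mul_ite, mul_one, mul_zero, Finset.sum_ite_eq,
    Finset.mem_range, of_apply]
  grind

lemma mul_truncatedDiagonal_mul_transpose_eq {m n r : ℕ} (hrm : r ≤ m) (hrn : r ≤ n) (d : ℕ → ℝ)
    (S : Matrix (Fin m) (Fin m) ℝ) (T : Matrix (Fin n) (Fin n) ℝ) :
    S * (of fun (i : Fin m) (j : Fin n) =>
        if (i : ℕ) = (j : ℕ) ∧ (i : ℕ) < r then d (i.1 + 1) else 0) * Tᵀ =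
      S.submatrix id (Fin.castLE hrm) * diagonal (fun p : Fin r => d (p.1 + 1)) *
        (T.submatrix id (Fin.castLE hrn))ᵀ := by
  have hS := mul_submatrix_one (Equiv.refl _) (Fin.castLE hrm) S
  have hT := mul_submatrix_one (Equiv.refl _) (Fin.castLE hrn) T
  simp only [Equiv.refl_symm, Equiv.coe_refl, Function.id_comp] at hS hT
  rw [truncatedDiagonal_eq_mul_diagonal_mul hrm hrn, ← hS, ← hT]
  simp only [transpose_mul, Matrix.mul_assoc]

theorem pinv_truncation_mul_norm_le_general
    {m n r : ℕ} (hrm : r ≤ m) (hrn : r ≤ n)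
    (A : Matrix (Fin m) (Fin n) ℝ)
    (S : Matrix (Fin m) (Fin m) ℝ) (T : Matrix (Fin n) (Fin n) ℝ)
    (hS : Sᵀ * S = 1)
    (hσ : 0 < singularValue A r)
    (H : Matrix (Fin n) (Fin r) ℝ)
    (hinv : IsUnit ((T.submatrix id (Fin.castLE hrn))ᵀ * H).det) :
    singularValue (pinvFCR ((S * (Matrix.of fun (i : Fin m) (j : Fin n) =>
        if (i : ℕ) = (j : ℕ) ∧ (i : ℕ) < r then singularValue A (i.1 + 1) else 0) * Tᵀ) * H)) 1 ≤
      singularValue (((T.submatrix id (Fin.castLE hrn))ᵀ * H)⁻¹) 1 / singularValue A r := by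
  set σ := singularValue A
  set Sr := S.submatrix id (Fin.castLE hrm)
  set D := diagonal fun p : Fin r => σ (p.1 + 1)
  set B := (T.submatrix id (Fin.castLE hrn))ᵀ * H
  have hσ_le : ∀ p : Fin r, σ r ≤ σ (p.1 + 1) := fun p =>
    singularValue_le_singularValue A (by omega) p.isLt hrn
  have hD : IsUnit D.det := by
    rw [det_diagonal]
    exact (Finset.prod_pos fun p _ => hσ.trans_le (hσ_le p)).ne'.isUnit
  have hSr : Srᵀ * Sr = 1 := transpose_mul_self_submatrix_eq_one hS (Fin.castLE_injective hrm)
  rw [mul_truncatedDiagonal_mul_transpose_eq hrm hrn, Matrix.mul_assoc, Matrix.mul_assoc,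
    pinvFCR_mul_of_transpose_mul_self_eq_one hSr (by rw [det_mul]; exact hD.mul hinv),
    Matrix.mul_inv_rev, singularValue_one_eq_l2_opNorm, singularValue_one_eq_l2_opNorm]
  calc ‖B⁻¹ * D⁻¹ * Srᵀ‖ ≤ ‖B⁻¹‖ * ‖D⁻¹‖ * ‖Srᵀ‖ :=
        (l2_opNorm_mul _ _).trans (by gcongr; exact l2_opNorm_mul _ _)
    _ ≤ ‖B⁻¹‖ * (σ r)⁻¹ * 1 := by
        gcongr
        · exact l2_opNorm_inv_diagonal_le hσ hσ_le
        · rw [← conjTranspose_eq_transpose_of_trivial, l2_opNorm_conjTranspose]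
          exact l2_opNorm_le_one_of_conjTranspose_mul_self_eq_one hSr
    _ = ‖B⁻¹‖ / σ r := by rw [mul_one, div_eq_mul_inv]

/-- Let `A ∈ ℝ^{m×n}` have SVD `A = S Σ Tᵀ`, with rank-r SVD truncation
`A_r = S Σ_r Tᵀ` (`r ≤ rank A`, i.e. `σ_r(A) > 0`), and let `H ∈ ℝ^{n×r}`.
If `T_{r}ᵀ H` is nonsingular (`T_r` = first r columns of `T`), then
`‖(A_r H)⁺‖ ≤ ‖(T_rᵀ H)⁻¹‖ / σ_r(A)` in the spectral norm. -/
theorem pinv_truncation_mul_norm_le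
    {m n r : ℕ} (hrm : r ≤ m) (hrn : r ≤ n)
    (A : Matrix (Fin m) (Fin n) ℝ)
    (S : Matrix (Fin m) (Fin m) ℝ) (T : Matrix (Fin n) (Fin n) ℝ)
    (hS : Sᵀ * S = 1) (hT : Tᵀ * T = 1)
    (hSVD : A = S * (Matrix.of fun (i : Fin m) (j : Fin n) =>
      if (i : ℕ) = (j : ℕ) then singularValue A (i.1 + 1) else 0) * Tᵀ)
    (hσ : 0 < singularValue A r)
    (H : Matrix (Fin n) (Fin r) ℝ)
    (hinv : IsUnit ((T.submatrix id (Fin.castLE hrn))ᵀ * H).det) :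
    singularValue (pinvFCR ((S * (Matrix.of fun (i : Fin m) (j : Fin n) =>
        if (i : ℕ) = (j : ℕ) ∧ (i : ℕ) < r then singularValue A (i.1 + 1) else 0) * Tᵀ) * H)) 1 ≤
      singularValue (((T.submatrix id (Fin.castLE hrn))ᵀ * H)⁻¹) 1 / singularValue A r :=
  pinv_truncation_mul_norm_le_general hrm hrn A S T hS hσ H hinv
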